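/- arXiv:2510.11338 — 10 statements merged into one kernel-verified Lean document; each statement's English description precedes it below -/
import Mathlib

section
/- For every nonnegative integer n, the double sum over k and l from 0 to n of C(n,k)*C(n+k,k)*C(n,l)*C(n+l,l)*(-2)^(k+l) / ((k+l+1)*C(k+l,k)) equals (-1)^n/(2n+1). -/
/-!
Write `P` for the shifted Legendre polynomial `∑ₖ (-1)ᵏ C(n,k) C(n+k,k) xᵏ`. The Beta integral
`∫₀¹ xᵏ (1-x)ˡ dx = k! l! / (k+l+1)!` turns the double sum into `∫₀¹ P(2x) P(2-2x) dx`. The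
substitution `u = 2x` and the symmetry of `P(u) P(2-u)` about `u = 1` reduce this to
`∫₀¹ P(u) P(2-u) du`. As `P` is orthogonal on `[0,1]` to all polynomials of degree `< n`, only
the leading coefficient `C(2n,n)` of `P(2-u)` survives, paired with
`∫₀¹ P(u) uⁿ du = (-1)ⁿ n!² / (2n+1)!`.
-/

open Finset Polynomial Nat intervalIntegral

theorem integral_pow_mul_one_sub_pow (k l : ℕ) :
    ∫ x in (0 : ℝ)..1, x ^ k * (1 - x) ^ l = (k ! * l ! / (k + l + 1)! : ℝ) := by
  induction l generalizing k with
  | zero =>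
    simp only [pow_zero, mul_one, integral_pow, add_zero, factorial_succ]
    push_cast
    field_simp
    simp
  | succ l ih =>
    have hsplit (x : ℝ) :
        x ^ k * (1 - x) ^ (l + 1) = x ^ k * (1 - x) ^ l - x ^ (k + 1) * (1 - x) ^ l := by
      ring
    simp_rw [hsplit]
    rw [integral_sub ((by fun_prop : Continuous _).intervalIntegrable _ _)
      ((by fun_prop : Continuous _).intervalIntegrable _ _), ih, ih,
      show k + 1 + l + 1 = k + l + 1 + 1 by ring, show k + (l + 1) + 1 = k + l + 1 + 1 by ring]
    push_cast [factorial_succ]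
    field_simp
    ring

theorem factorial_mul_factorial_div_factorial_eq_inv {K : Type*} [Field K] [CharZero K] (k l : ℕ) :
    (k ! * l ! / (k + l + 1)! : K) = ((k + l + 1) * (k + l).choose k : K)⁻¹ := by
  rw [cast_add_choose, factorial_succ]
  push_cast
  field_simp

theorem integral_aeval_mul_aeval_one_sub (P Q : ℤ[X]) (c : ℝ) :
    ∫ x in (0 : ℝ)..1, aeval (c * x) P * aeval (c * (1 - x)) Q
      = ∑ k ∈ range (P.natDegree + 1), ∑ l ∈ range (Q.natDegree + 1),
          P.coeff k * Q.coeff l * c ^ (k + l) * (k ! * l ! / (k + l + 1)! : ℝ) := by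
  simp_rw [aeval_eq_sum_range, sum_mul_sum, zsmul_eq_mul]
  rw [integral_finsetSum fun k _ =>
    (continuous_finsetSum _ fun l _ => by fun_prop).intervalIntegrable _ _]
  refine sum_congr rfl fun k _ => ?_
  rw [integral_finsetSum fun l _ => (by fun_prop : Continuous _).intervalIntegrable _ _]
  refine sum_congr rfl fun l _ => ?_
  rw [← integral_pow_mul_one_sub_pow, ← integral_const_mul]
  congr 1 with x
  rw [mul_pow, mul_pow]
  ring

theorem integral_comp_two_mul_of_symm {E : Type*} [NormedAddCommGroup E] [NormedSpace ℝ E]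
    {f : ℝ → E} (hf : Continuous f) {a : ℝ} (hsymm : ∀ u, f (2 * a - u) = f u) :
    ∫ x in (0 : ℝ)..a, f (2 * x) = ∫ x in (0 : ℝ)..a, f x := by
  have hright : ∫ x in a..2 * a, f x = ∫ x in (0 : ℝ)..a, f x := by
    have h := integral_comp_sub_left f (2 * a) (a := 0) (b := a)
    rw [sub_zero, two_mul, add_sub_cancel_right, ← two_mul] at h
    simp_rw [hsymm] at h
    exact h.symm
  rw [integral_comp_mul_left f two_ne_zero, mul_zero,
    ← integral_add_adjacent_intervals (hf.intervalIntegrable 0 a) (hf.intervalIntegrable a _),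
    hright, ← two_smul ℝ, inv_smul_smul₀ two_ne_zero]

theorem sum_range_neg_one_pow_mul_choose_div (n j : ℕ) :
    ∑ k ∈ range (n + 1), (-1 : ℝ) ^ k * n.choose k / (k + j + 1) = j ! * n ! / (j + n + 1)! := by
  have hexpand (x : ℝ) :
      x ^ j * (1 - x) ^ n = ∑ k ∈ range (n + 1), (-1) ^ k * n.choose k * x ^ (k + j) := by
    rw [sub_eq_neg_add, add_pow, mul_sum]
    refine sum_congr rfl fun k _ => ?_
    rw [neg_pow]
    ring
  rw [← integral_pow_mul_one_sub_pow]
  simp_rw [hexpand]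
  rw [integral_finsetSum fun k _ => (by fun_prop : Continuous _).intervalIntegrable _ _]
  refine sum_congr rfl fun k _ => ?_
  rw [integral_const_mul, integral_pow]
  push_cast
  field_simp
  ring

theorem sum_range_neg_one_pow_mul_choose_mul_eval_eq_zero {R : Type*} [CommRing R] {q : R[X]}
    {n : ℕ} (hq : q.degree < n) (x : R) :
    ∑ k ∈ range (n + 1), (-1) ^ k * n.choose k * q.eval (x + k) = 0 := by
  rcases eq_or_ne q 0 with rfl | hq0
  · simp
  have hΔ := congr_fun (fwdDiff_iter_eq_zero_of_degree_lt
    ((natDegree_lt_iff_degree_lt hq0).mpr hq)) x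
  rw [fwdDiff_iter_eq_sum_shift, Pi.zero_apply] at hΔ
  calc ∑ k ∈ range (n + 1), (-1) ^ k * n.choose k * q.eval (x + k)
      = (-1) ^ n * ∑ k ∈ range (n + 1),
          ((-1 : ℤ) ^ (n - k) * n.choose k) • q.eval (x + k • 1) := by
        rw [mul_sum]
        refine sum_congr rfl fun k hk => ?_
        obtain ⟨m, rfl⟩ := Nat.exists_eq_add_of_le (mem_range_succ_iff.mp hk)
        simp only [add_tsub_cancel_left, zsmul_eq_mul, nsmul_eq_mul, mul_one, pow_add]
        push_cast
        linear_combination (-((-1) ^ k * (k + m).choose k * q.eval (x + k))) *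
          (Even.neg_one_pow ⟨m, rfl⟩ : (-1 : R) ^ (m + m) = 1)
    _ = 0 := by rw [hΔ, mul_zero]

/-- Partial fractions for `C(n+k, n) / (k+j+1)` as a function of `k`: the residue at
`k = -(j+1)` is the value there of `(k+1)⋯(k+n) / n!`, namely `(-1)ⁿ C(j, n)`. -/
theorem exists_degree_lt_cast_choose_add_div_eq (n j : ℕ) :
    ∃ q : ℝ[X], q.degree < n ∧ ∀ k : ℕ, ((n + k).choose n : ℝ) / (k + j + 1)
      = q.eval (1 + k : ℝ) + (-1) ^ n * j.choose n / (k + j + 1) := by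
  set A := ascPochhammer ℝ n
  set q := A /ₘ (X - C (-j : ℝ))
  have hA0 : A ≠ 0 := (monic_ascPochhammer ℝ n).ne_zero
  have hq : q.degree < n :=
    calc q.degree < A.degree :=
          degree_divByMonic_lt _ _ hA0 (by rw [degree_X_sub_C]; exact one_pos)
      _ = n := by rw [degree_eq_natDegree hA0, ascPochhammer_natDegree]
  have hA (k : ℕ) : (n ! : ℝ) * (n + k).choose n = A.eval (1 + k : ℝ) := by
    rw [add_comm n, ← cast_mul, ← ascFactorial_eq_factorial_mul_choose, cast_ascFactorial,
      cast_add_one, add_comm]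
  have hdiv (x : ℝ) : A.eval x = (x + j) * q.eval x + (-1) ^ n * n ! * j.choose n := by
    have hmod := congr_arg (eval x) (modByMonic_add_div A (X - C (-j : ℝ)))
    rw [modByMonic_X_sub_C_eq_C_eval, ascPochhammer_eval_neg_eq_descPochhammer] at hmod
    simp only [eval_add, eval_C, eval_mul, eval_sub, eval_X] at hmod
    rw [cast_choose_eq_descPochhammer_div]
    field_simp
    linear_combination -hmod
  refine ⟨C (n ! : ℝ)⁻¹ * q, by rwa [degree_C_mul (by positivity)], fun k => ?_⟩
  have h := hA k
  rw [hdiv] at h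
  rw [eval_mul, eval_C]
  field_simp
  linear_combination h

theorem integral_shiftedLegendre_mul_pow (n j : ℕ) :
    ∫ u in (0 : ℝ)..1, aeval u (shiftedLegendre n) * u ^ j
      = (-1) ^ n * j.choose n * (j ! * n ! / (j + n + 1)!) := by
  obtain ⟨q, hq, hpf⟩ := exists_degree_lt_cast_choose_add_div_eq n j
  have hexpand (u : ℝ) : aeval u (shiftedLegendre n) * u ^ j
      = ∑ k ∈ range (n + 1), (-1) ^ k * n.choose k * (n + k).choose n * u ^ (k + j) := by
    rw [aeval_eq_sum_range, natDegree_shiftedLegendre, sum_mul]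
    refine sum_congr rfl fun k _ => ?_
    rw [coeff_shiftedLegendre, zsmul_eq_mul]
    push_cast
    ring
  simp_rw [hexpand]
  rw [integral_finsetSum fun k _ => (by fun_prop : Continuous _).intervalIntegrable _ _]
  calc ∑ k ∈ range (n + 1),
        ∫ u in (0 : ℝ)..1, (-1) ^ k * n.choose k * (n + k).choose n * u ^ (k + j)
      = ∑ k ∈ range (n + 1), (-1 : ℝ) ^ k * n.choose k * ((n + k).choose n / (k + j + 1)) := by
        refine sum_congr rfl fun k _ => ?_
        rw [integral_const_mul, integral_pow]
        push_cast
        field_simp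
        ring
    _ = ∑ k ∈ range (n + 1), (-1) ^ k * n.choose k * q.eval (1 + k : ℝ)
          + (-1) ^ n * j.choose n *
            ∑ k ∈ range (n + 1), (-1 : ℝ) ^ k * n.choose k / (k + j + 1) := by
        simp_rw [hpf, mul_add, sum_add_distrib, mul_sum]
        congr 1
        refine sum_congr rfl fun k _ => ?_
        ring
    _ = (-1) ^ n * j.choose n * (j ! * n ! / (j + n + 1)!) := by
        rw [sum_range_neg_one_pow_mul_choose_mul_eval_eq_zero hq,
          sum_range_neg_one_pow_mul_choose_div, zero_add]

theorem integral_shiftedLegendre_mul_aeval {n : ℕ} {Q : ℤ[X]} (hQ : Q.natDegree ≤ n) :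
    ∫ u in (0 : ℝ)..1, aeval u (shiftedLegendre n) * aeval u Q
      = (-1) ^ n * Q.coeff n * (n ! * n ! / (n + n + 1)!) := by
  simp_rw [aeval_eq_sum_range' (lt_succ_of_le hQ), mul_sum, zsmul_eq_mul,
    mul_left_comm _ (_ : ℝ)]
  rw [integral_finsetSum fun j _ => (by fun_prop : Continuous _).intervalIntegrable _ _,
    sum_range_succ, sum_eq_zero fun j hj => ?_, zero_add]
  · rw [integral_const_mul, integral_shiftedLegendre_mul_pow, choose_self]
    push_cast
    ring
  · rw [integral_const_mul, integral_shiftedLegendre_mul_pow,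
      choose_eq_zero_of_lt (mem_range.mp hj)]
    simp

theorem natDegree_two_sub_X {R : Type*} [Ring R] [Nontrivial R] :
    (2 - X : R[X]).natDegree = 1 := by
  compute_degree!

theorem coeff_shiftedLegendre_comp_two_sub_X (n : ℕ) :
    ((shiftedLegendre n).comp (2 - X)).coeff n = (2 * n).choose n := by
  have hlead : (2 - X : ℤ[X]).leadingCoeff = -1 := by
    rw [leadingCoeff, natDegree_two_sub_X]
    simp
  have h :=
    leadingCoeff_comp (p := shiftedLegendre n) (natDegree_two_sub_X (R := ℤ) ▸ one_ne_zero)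
  rw [leadingCoeff, natDegree_comp, natDegree_two_sub_X, natDegree_shiftedLegendre, mul_one] at h
  rw [h, hlead, leadingCoeff, natDegree_shiftedLegendre, coeff_shiftedLegendre, ← two_mul,
    choose_self, cast_one, mul_one, mul_right_comm, ← mul_pow]
  norm_num

theorem stmt_0 (n : ℕ) :
    ∑ k ∈ Finset.range (n+1), ∑ l ∈ Finset.range (n+1),
      ((n.choose k : ℚ) * ((n+k).choose k) * (n.choose l) * ((n+l).choose l) * (-2)^(k+l))
        / (((k : ℚ) + l + 1) * ((k+l).choose k))
    = (-1)^n / (2*(n : ℚ) + 1) := by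
  set P := shiftedLegendre n
  apply Rat.cast_injective (α := ℝ)
  push_cast
  calc _ = ∫ x in (0 : ℝ)..1, aeval (2 * x) P * aeval (2 * (1 - x)) P := by
        rw [integral_aeval_mul_aeval_one_sub, natDegree_shiftedLegendre]
        refine sum_congr rfl fun k _ => sum_congr rfl fun l _ => ?_
        rw [coeff_shiftedLegendre, coeff_shiftedLegendre,
          factorial_mul_factorial_div_factorial_eq_inv, choose_symm_add (a := n) (b := k),
          choose_symm_add (a := n) (b := l), neg_pow 2, pow_add (-1 : ℝ)]
        push_cast
        ring
    _ = ∫ u in (0 : ℝ)..1, aeval u P * aeval (2 - u) P := by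
        rw [← integral_comp_two_mul_of_symm (f := fun u => aeval u P * aeval (2 - u) P)
          (by fun_prop) fun u => by rw [mul_one, sub_sub_cancel, mul_comm]]
        simp only [mul_one_sub]
    _ = ∫ u in (0 : ℝ)..1, aeval u P * aeval u (P.comp (2 - X)) := by
        simp [aeval_comp, map_ofNat]
    _ = (-1) ^ n / (2 * n + 1) := by
        have hdeg : (P.comp (2 - X)).natDegree ≤ n := by
          rw [natDegree_comp, natDegree_shiftedLegendre, natDegree_two_sub_X, mul_one]
        have hC : ((n + n).choose n : ℝ) ≠ 0 := cast_ne_zero.mpr (choose_pos (le_add_right n n)).ne'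
        rw [integral_shiftedLegendre_mul_aeval hdeg, coeff_shiftedLegendre_comp_two_sub_X,
          factorial_mul_factorial_div_factorial_eq_inv, two_mul]
        push_cast
        field_simp
        ring
end

section
/- For all nonnegative integers n and k with k ≤ n, the sum over l from 0 to n of (-1)^l/(k+l+1) * C(n+l,l)*C(n,l) equals 0 if k < n, and equals (-1)^n/((2n+1)*C(2n,n)) if k = n. -/
/-!
Write `C(n+l, l) = P(l) / n!` with `P(X) = (X+1)(X+2)⋯(X+n)`. For a polynomial `P` of degree at
most `n`, the alternating sum `∑ₗ (-1)ˡ C(n,l) P(l)` is `(-1)ⁿ n!` times the `Xⁿ`-coefficient of `P`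
(it is the `n`-th forward difference). Subtracting a multiple of `X(X-1)⋯(X-n)`, which vanishes at
the nodes `l = 0, …, n`, makes a multiple of `P(X)` divisible by `X + a`; applying the first fact to
the quotient gives the partial fraction identity
`a(a+1)⋯(a+n) · ∑ₗ (-1)ˡ C(n,l) P(l) / (a+l) = n! P(-a)`.
With `a = k+1` the right side is `n!·(-k)(-k+1)⋯(-k+n-1)`, which vanishes for `k < n` and equals
`(-1)ⁿ n!²` for `k = n`.
-/

open Finset Polynomial Nat

theorem sum_range_neg_one_pow_mul_choose_mul_eq_fwdDiff_iter {R : Type*} [CommRing R]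
    (f : R → R) (n : ℕ) :
    ∑ l ∈ range (n + 1), (-1) ^ l * n.choose l * f l = (-1) ^ n * (fwdDiff 1)^[n] f 0 := by
  rw [fwdDiff_iter_eq_sum_shift, mul_sum]
  refine sum_congr rfl fun l hl => ?_
  obtain ⟨m, rfl⟩ := Nat.exists_eq_add_of_le (Nat.lt_succ_iff.mp (mem_range.mp hl))
  have hsq : ((-1 : R) ^ m) ^ 2 = 1 := by rw [← pow_mul, pow_mul', neg_one_sq, one_pow]
  simp only [Nat.add_sub_cancel_left, zsmul_eq_mul, nsmul_eq_mul, zero_add, mul_one]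
  push_cast
  linear_combination -(-1 : R) ^ l * (l + m).choose l * f l * hsq

namespace Polynomial

theorem sum_range_neg_one_pow_mul_choose_mul_eval {R : Type*} [CommRing R]
    {P : R[X]} {n : ℕ} (hP : P.natDegree ≤ n) :
    ∑ l ∈ range (n + 1), (-1) ^ l * n.choose l * P.eval (l : R) = (-1) ^ n * n ! * P.coeff n := by
  refine (sum_range_neg_one_pow_mul_choose_mul_eq_fwdDiff_iter P.eval n).trans ?_
  rcases hP.lt_or_eq with hlt | rfl
  · simp [fwdDiff_iter_eq_zero_of_degree_lt hlt, coeff_eq_zero_of_natDegree_lt hlt]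
  · rw [fwdDiff_iter_degree_eq_factorial, coeff_natDegree]
    simp only [Pi.smul_apply, smul_eq_mul, Pi.natCast_apply]
    rw [mul_assoc, mul_comm P.leadingCoeff]

theorem exists_natDegree_le_coeff_eq_mul_eval_eq {R : Type*} [CommRing R] [IsDomain R]
    {P : R[X]} {n : ℕ} (hP : P.natDegree ≤ n) (a : R) :
    ∃ Q : R[X], Q.natDegree ≤ n ∧ Q.coeff n = -P.eval (-a) ∧
      ∀ l ≤ n, (a + l) * Q.eval (l : R) = (descPochhammer R (n + 1)).eval (-a) * P.eval (l : R) := by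
  set H := descPochhammer R (n + 1)
  set N := C (H.eval (-a)) * P - C (P.eval (-a)) * H
  have hNQ : (X - C (-a)) * (N /ₘ (X - C (-a))) = N :=
    mul_divByMonic_eq_iff_isRoot.mpr (by simp [N, mul_comm])
  set Q := N /ₘ (X - C (-a))
  have hH : H.natDegree = n + 1 := descPochhammer_natDegree R (n + 1)
  have hN : N.natDegree ≤ n + 1 :=
    (natDegree_sub_le _ _).trans <| max_le ((natDegree_C_mul_le _ _).trans (hP.trans n.le_succ))
      ((natDegree_C_mul_le _ _).trans hH.le)
  have hQ : Q.natDegree ≤ n := by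
    rw [natDegree_divByMonic _ (monic_X_sub_C _), natDegree_X_sub_C]; omega
  refine ⟨Q, hQ, ?_, fun l hl => ?_⟩
  · have h := congrArg (coeff · (n + 1)) hNQ
    simp only [mul_comm (X - C (-a)), coeff_mul_X_sub_C,
      coeff_eq_zero_of_natDegree_lt (hQ.trans_lt n.lt_succ_self), zero_mul, sub_zero] at h
    rw [h, coeff_sub, coeff_C_mul, coeff_C_mul,
      coeff_eq_zero_of_natDegree_lt (hP.trans_lt n.lt_succ_self), ← hH,
      (monic_descPochhammer R (n + 1)).coeff_natDegree]
    ring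
  · have h := congrArg (eval (l : R)) hNQ
    simp only [eval_mul, eval_sub, eval_X, eval_C, N, H,
      descPochhammer_eval_coe_nat_of_lt (Nat.lt_succ_of_le hl), mul_zero, sub_zero] at h
    linear_combination h

theorem ascPochhammer_eval_mul_sum_range_choose_mul_eval_div {K : Type*} [Field K]
    {P : K[X]} {n : ℕ} (hP : P.natDegree ≤ n) {a : K} (ha : ∀ l ≤ n, a + l ≠ 0) :
    (ascPochhammer K (n + 1)).eval a *
        ∑ l ∈ range (n + 1), (-1) ^ l * n.choose l * P.eval (l : K) / (a + l) =
      n ! * P.eval (-a) := by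
  set c := (descPochhammer K (n + 1)).eval (-a)
  have hc : (ascPochhammer K (n + 1)).eval a = (-1) ^ (n + 1) * c := by
    simpa using ascPochhammer_eval_neg_eq_descPochhammer K (-a) (n + 1)
  obtain ⟨Q, hQ, hQn, hQl⟩ := exists_natDegree_le_coeff_eq_mul_eval_eq hP a
  have hsum : c * ∑ l ∈ range (n + 1), (-1) ^ l * n.choose l * P.eval (l : K) / (a + l) =
      (-1) ^ n * n ! * -P.eval (-a) := by
    rw [mul_sum, ← hQn, ← sum_range_neg_one_pow_mul_choose_mul_eval hQ]
    refine sum_congr rfl fun l hl => ?_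
    have hl' := Nat.lt_succ_iff.mp (mem_range.mp hl)
    have hQl' : Q.eval (l : K) = c * P.eval (l : K) / (a + l) := by
      rw [eq_div_iff (ha l hl'), mul_comm, hQl l hl']
    rw [hQl']
    ring
  have hsq : ((-1 : K) ^ n) ^ 2 = 1 := by rw [← pow_mul, pow_mul', neg_one_sq, one_pow]
  rw [hc, mul_assoc]
  linear_combination (-1) ^ (n + 1) * hsum + n ! * P.eval (-a) * hsq

end Polynomial

theorem ascPochhammer_eval_add_one_mul_sum_range_choose_div {K : Type*} [Field K] [CharZero K]
    (n : ℕ) {x : K} (hx : ∀ l ≤ n, x + l + 1 ≠ 0) :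
    (ascPochhammer K (n + 1)).eval (x + 1) *
        ∑ l ∈ range (n + 1), (-1) ^ l / (x + l + 1) * ((n + l).choose l) * (n.choose l) =
      (ascPochhammer K n).eval (-x) := by
  set P := (ascPochhammer K n).comp (X + 1)
  have hP : P.natDegree ≤ n := by
    rw [natDegree_comp, ascPochhammer_natDegree, ← C_1, natDegree_X_add_C, mul_one]
  have hPl : ∀ l : ℕ, P.eval (l : K) = n ! * (n + l).choose l := by
    intro l
    rw [eval_comp, eval_add, eval_X, eval_one, ← Nat.cast_succ, ← Nat.cast_ascFactorial,
      Nat.ascFactorial_eq_factorial_mul_choose, add_comm l, ← Nat.choose_symm_add]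
    push_cast; ring
  have h := ascPochhammer_eval_mul_sum_range_choose_mul_eval_div hP (a := x + 1) fun l hl => by
    rw [add_right_comm]; exact hx l hl
  rw [eval_comp, eval_add, eval_X, eval_one, neg_add_rev, neg_add_cancel_comm] at h
  have hsum : ∑ l ∈ range (n + 1), (-1) ^ l * n.choose l * P.eval (l : K) / (x + 1 + l) =
      n ! * ∑ l ∈ range (n + 1), (-1) ^ l / (x + l + 1) * ((n + l).choose l) * (n.choose l) := by
    rw [mul_sum]
    exact sum_congr rfl fun l _ => by rw [hPl]; ring
  rw [hsum, mul_left_comm] at h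
  exact mul_left_cancel₀ (Nat.cast_ne_zero.mpr n.factorial_ne_zero) h

theorem stmt_2_general (n k : ℕ) :
    (k < n → ∑ l ∈ Finset.range (n+1),
      (-1)^l / ((k : ℚ) + l + 1) * ((n+l).choose l) * (n.choose l) = 0) ∧
    (k = n → ∑ l ∈ Finset.range (n+1),
      (-1)^l / ((k : ℚ) + l + 1) * ((n+l).choose l) * (n.choose l)
        = (-1)^n / ((2*(n:ℚ) + 1) * ((2*n).choose n))) := by
  have h := ascPochhammer_eval_add_one_mul_sum_range_choose_div (K := ℚ) n (x := k)
    fun l _ => by positivity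
  refine ⟨fun hlt => ?_, ?_⟩
  · rw [ascPochhammer_eval_neg_coe_nat_of_lt hlt] at h
    exact (mul_eq_zero.mp h).resolve_left (ascPochhammer_pos _ _ (by positivity)).ne'
  · rintro rfl
    have hD : (ascPochhammer ℚ (k + 1)).eval ((k : ℚ) + 1) =
        (2 * k + 1) * k ! * (2 * k).choose k := by
      rw [ascPochhammer_succ_eval, ← Nat.cast_succ, ← Nat.cast_ascFactorial,
        Nat.ascFactorial_eq_factorial_mul_choose, ← two_mul]
      push_cast; ring
    have hN : (ascPochhammer ℚ k).eval (-(k : ℚ)) = (-1) ^ k * k ! := by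
      rw [ascPochhammer_eval_neg_eq_descPochhammer, descPochhammer_eval_eq_descFactorial,
        Nat.descFactorial_self]
    rw [hD, hN] at h
    have hC : ((2 * k).choose k : ℚ) ≠ 0 := Nat.cast_ne_zero.mpr (Nat.choose_pos (by omega)).ne'
    rw [eq_div_iff (by positivity)]
    apply mul_left_cancel₀ (Nat.cast_ne_zero.mpr k.factorial_ne_zero : (k ! : ℚ) ≠ 0)
    linear_combination h

theorem stmt_2 (n k : ℕ) (hk : k ≤ n) :
    (k < n → ∑ l ∈ Finset.range (n+1),
      (-1)^l / ((k : ℚ) + l + 1) * ((n+l).choose l) * (n.choose l) = 0) ∧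
    (k = n → ∑ l ∈ Finset.range (n+1),
      (-1)^l / ((k : ℚ) + l + 1) * ((n+l).choose l) * (n.choose l)
        = (-1)^n / ((2*(n:ℚ) + 1) * ((2*n).choose n))) :=
  stmt_2_general n k
end

section
/- For any nonnegative integer n and any rational (or real) x, the partial fraction identity holds: the sum over l from 0 to n of (-1)^l/(x+l) * C(n+l,l)*C(n,l) equals (1-x)(2-x)···(n-x) / (x(x+1)···(x+n)), i.e. (−x+1)_n / (x)_{n+1}, provided x is not a nonpositive integer ≥ −n. -/
/-!
Both sides are rational functions of `x` with simple poles at `0, -1, …, -n`. The right side is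
`P(x) / ∏ (x + i)` with `P = ∏ (i + 1 - X)` of degree `n`, fewer than the `n + 1` poles, so Lagrange
interpolation of `P` at the nodes `-l` expands it into partial fractions whose coefficient at
`-l` is `P(-l)` times the nodal weight `∏_{j ≠ l} (j - l)⁻¹`. Here `P(-l) = (n + l)! / l!` and the
weight is `(-1)^l / (l! (n - l)!)`, whose product is `(-1)^l C(n + l, l) C(n, l)`.
-/

open Polynomial Finset Nat

namespace Lagrange

variable {F ι : Type*} [Field F] [DecidableEq ι] {s : Finset ι} {v : ι → F} {f : F[X]} {x : F}

theorem eval_div_eval_nodal (hvs : Set.InjOn v s) (hf : f.degree < #s) (hx : ∀ i ∈ s, x ≠ v i) :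
    f.eval x / (nodal s v).eval x = ∑ i ∈ s, nodalWeight s v i * f.eval (v i) / (x - v i) := by
  nth_rewrite 1 [eq_interpolate hvs hf]
  rw [eval_interpolate_not_at_node _ hx, mul_div_cancel_left₀ _ (eval_nodal_not_at_node hx)]
  exact sum_congr rfl fun i _ => by ring

end Lagrange

section

variable {R : Type*} [CommRing R]

theorem prod_range_natCast_sub_self (l : ℕ) :
    ∏ j ∈ range l, ((j : R) - l) = (-1) ^ l * (l ! : R) := by
  rw [← prod_range_reflect, ← prod_range_add_one_eq_factorial, cast_prod, ← card_range l,
    ← prod_const, card_range, ← prod_mul_distrib]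
  refine prod_congr rfl fun j hj => ?_
  rw [mem_range] at hj
  rw [Nat.cast_sub (by omega), Nat.cast_sub (by omega)]
  push_cast
  ring

theorem prod_Ico_natCast_sub_self {l n : ℕ} (hl : l ≤ n) :
    ∏ j ∈ Ico (l + 1) (n + 1), ((j : R) - l) = ((n - l) ! : R) := by
  rw [prod_Ico_eq_prod_range, ← prod_range_add_one_eq_factorial, cast_prod,
    show n + 1 - (l + 1) = n - l by omega]
  refine prod_congr rfl fun j _ => ?_
  push_cast
  ring

theorem factorial_mul_prod_range_natCast_add (l n : ℕ) :
    (l ! : R) * ∏ i ∈ range n, ((l : R) + 1 + i) = ((l + n) ! : R) := by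
  rw [← factorial_mul_ascFactorial, ascFactorial_eq_prod_range]
  push_cast
  rfl

theorem range_add_one_erase_eq_union {l n : ℕ} (hl : l ≤ n) :
    (range (n + 1)).erase l = range l ∪ Ico (l + 1) (n + 1) := by
  ext i
  simp only [mem_erase, mem_range, mem_union, mem_Ico]
  omega

end

section

variable {K : Type*} [Field K] {l n : ℕ}

theorem nodalWeight_range_neg_natCast (hl : l ≤ n) :
    Lagrange.nodalWeight (range (n + 1)) (fun i : ℕ => -(i : K)) l
      = ((-1) ^ l * l ! * (n - l)! : K)⁻¹ := by
  rw [Lagrange.nodalWeight, prod_inv_distrib, range_add_one_erase_eq_union hl,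
    prod_union (disjoint_left.2 fun i hi hi' => by simp only [mem_range, mem_Ico] at hi hi'; omega)]
  simp_rw [neg_sub_neg]
  rw [prod_range_natCast_sub_self, prod_Ico_natCast_sub_self hl, mul_assoc]

theorem nodalWeight_range_neg_natCast_mul_prod [CharZero K] (hl : l ≤ n) :
    Lagrange.nodalWeight (range (n + 1)) (fun i : ℕ => -(i : K)) l
        * ∏ i ∈ range n, ((i : K) + 1 + l)
      = (-1) ^ l * (n + l).choose l * n.choose l := by
  have hfac (m : ℕ) : (m ! : K) ≠ 0 := Nat.cast_ne_zero.2 m.factorial_ne_zero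
  have hprod : ∏ i ∈ range n, ((i : K) + 1 + l) = ((l + n) ! : K) / l ! := by
    rw [eq_div_iff (hfac l), mul_comm, ← factorial_mul_prod_range_natCast_add]
    simp_rw [add_right_comm _ (1 : K), add_comm (l : K)]
  rw [nodalWeight_range_neg_natCast hl, hprod, cast_choose K (le_add_left l n), cast_choose K hl,
    Nat.add_sub_cancel, add_comm l n]
  field_simp [hfac]
  rw [← pow_mul, pow_mul', neg_one_sq, one_pow]

end

theorem stmt_3 (n : ℕ) (x : ℚ) (hx : ∀ l : ℕ, l ≤ n → x + l ≠ 0) :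
    ∑ l ∈ Finset.range (n+1), (-1)^l / (x + l) * ((n+l).choose l) * (n.choose l)
      = (∏ i ∈ Finset.range n, ((i : ℚ) + 1 - x)) / (∏ i ∈ Finset.range (n+1), (x + i)) := by
  have hinj : Set.InjOn (fun i : ℕ => -(i : ℚ)) (range (n + 1)) := fun a _ b _ h => by simpa using h
  have hdeg : (∏ i ∈ range n, (C ((i : ℚ) + 1) - X)).degree < (#(range (n + 1)) : WithBot ℕ) := by
    refine (degree_le_of_natDegree_le (n := n) ((natDegree_prod_le _ _).trans ?_)).trans_lt ?_
    · refine (sum_le_card_nsmul _ _ 1 fun i _ => ?_).trans (by simp)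
      exact (natDegree_sub_le _ _).trans (by rw [natDegree_C, natDegree_X]; simp)
    · rw [card_range]
      exact_mod_cast n.lt_succ_self
  have hnodes : ∀ i ∈ range (n + 1), x ≠ -(i : ℚ) := fun i hi =>
    fun h => hx i (by simpa [Nat.lt_succ_iff] using hi) (by rw [h]; ring)
  have h := Lagrange.eval_div_eval_nodal hinj hdeg hnodes
  simp only [eval_prod, eval_sub, eval_C, eval_X, Lagrange.eval_nodal, sub_neg_eq_add] at h
  rw [h]
  refine sum_congr rfl fun l hl => ?_
  rw [nodalWeight_range_neg_natCast_mul_prod (by simpa [Nat.lt_succ_iff] using hl)]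
  ring
end

section
/- For any nonnegative integers k and l, the sum over n from 0 to k+l of (-1)^n/(n+2) * C(n,l)*C(l,n-k) equals (-1)^(k+l) / C(k+l+2, l+1). -/
/-!
Substituting `n = k + i`, the sum is `(-1)^k ∑ᵢ (-1)^i C(l,i) P(i) / (i + k + 2)` with
`P(t) = C(k + t, l)` of degree `l`, i.e. up to sign an `l`-th forward difference.
Writing `P(t) = P(-y) + (t + y) Q(t)` with `y = k + 2` and `deg Q < l`, the `l`-th difference
kills `Q`, and the `l`-th difference of `t ↦ 1/(t + y)` is `(-1)^l l! / (y (y+1) ⋯ (y+l))`.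
Since `P(-y) = C(-2, l) = (-1)^l (l + 1)`, the sum collapses to
`(-1)^(k+l) (l+1)! (k+1)! / (k+l+2)!`.
-/

open Finset Polynomial Nat fwdDiff

theorem sum_neg_one_pow_mul_choose_mul_eq_fwdDiff_iter {M R : Type*} [AddCommMonoid M]
    [CommRing R] (h : M) (f : M → R) (n : ℕ) (y : M) :
    ∑ i ∈ range (n + 1), (-1) ^ i * (n.choose i : R) * f (y + i • h)
      = (-1) ^ n * Δ_[h] ^[n] f y := by
  rw [fwdDiff_iter_eq_sum_shift, mul_sum]
  refine sum_congr rfl fun i hi ↦ ?_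
  obtain ⟨j, rfl⟩ := Nat.exists_eq_add_of_le (Nat.lt_succ_iff.mp (mem_range.mp hi))
  rw [Nat.add_sub_cancel_left, zsmul_eq_mul]
  push_cast
  have hsq : ((-1 : R) ^ j) ^ 2 = 1 := by simp [← pow_mul]
  linear_combination (-(-1 : R) ^ i * (((i + j).choose i : ℕ) : R) * f (y + i • h)) * hsq

theorem Polynomial.sum_neg_one_pow_mul_choose_mul_eval_eq_zero {R : Type*} [CommRing R]
    {P : R[X]} {n : ℕ} (hP : P.natDegree < n) :
    ∑ i ∈ range (n + 1), (-1) ^ i * (n.choose i : R) * P.eval (i : R) = 0 := by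
  simpa [fwdDiff_iter_eq_zero_of_degree_lt hP] using
    sum_neg_one_pow_mul_choose_mul_eq_fwdDiff_iter 1 P.eval n 0

theorem fwdDiff_iter_inv {K : Type*} [Field K] (n : ℕ) (y : K)
    (hy : (ascPochhammer K (n + 1)).eval y ≠ 0) :
    Δ_[1] ^[n] (fun t : K ↦ t⁻¹) y = (-1) ^ n * n ! / (ascPochhammer K (n + 1)).eval y := by
  induction n generalizing y with
  | zero => simp
  | succ n ih =>
    have hleft :
        (ascPochhammer K (n + 2)).eval y = y * (ascPochhammer K (n + 1)).eval (y + 1) := by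
      rw [ascPochhammer_succ_left, eval_mul, eval_X, eval_comp, eval_add, eval_X, eval_one]
    have hright : (ascPochhammer K (n + 2)).eval y
        = (ascPochhammer K (n + 1)).eval y * (y + (n + 1)) := by
      rw [ascPochhammer_succ_eval]; push_cast; ring
    have hy₁ : (ascPochhammer K (n + 1)).eval (y + 1) ≠ 0 := right_ne_zero_of_mul (hleft ▸ hy)
    have hy₀ : (ascPochhammer K (n + 1)).eval y ≠ 0 := left_ne_zero_of_mul (hright ▸ hy)
    rw [Function.iterate_succ_apply', fwdDiff, ih _ hy₁, ih _ hy₀]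
    field_simp
    push_cast [Nat.factorial_succ]
    linear_combination (-1) ^ n * (n ! : K) *
      ((ascPochhammer K (n + 1)).eval y * hleft - (ascPochhammer K (n + 1)).eval (y + 1) * hright)

theorem sum_neg_one_pow_mul_choose_div_add {K : Type*} [Field K] (n : ℕ) (y : K)
    (hy : (ascPochhammer K (n + 1)).eval y ≠ 0) :
    ∑ i ∈ range (n + 1), (-1) ^ i * (n.choose i : K) / (y + i)
      = n ! / (ascPochhammer K (n + 1)).eval y := by
  have h := sum_neg_one_pow_mul_choose_mul_eq_fwdDiff_iter 1 (fun t : K ↦ t⁻¹) n y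
  simp only [nsmul_one, fwdDiff_iter_inv n y hy] at h
  simp only [div_eq_mul_inv, h, ← mul_assoc, ← pow_add, ← two_mul, pow_mul, neg_one_sq, one_pow,
    one_mul]

theorem Polynomial.sum_neg_one_pow_mul_choose_mul_eval_div_add {K : Type*} [Field K]
    {P : K[X]} {n : ℕ} (hP : P.natDegree ≤ n) (y : K)
    (hy : (ascPochhammer K (n + 1)).eval y ≠ 0) :
    ∑ i ∈ range (n + 1), (-1) ^ i * (n.choose i : K) * (P.eval (i : K) / (y + i))
      = n ! * P.eval (-y) / (ascPochhammer K (n + 1)).eval y := by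
  obtain ⟨Q, hQ⟩ := X_sub_C_dvd_sub_C_eval (p := P) (a := -y)
  have hsplit : ∀ i ∈ range (n + 1), (-1) ^ i * (n.choose i : K) * (P.eval (i : K) / (y + i))
      = (-1) ^ i * (n.choose i : K) * Q.eval (i : K)
        + P.eval (-y) * ((-1) ^ i * (n.choose i : K) / (y + i)) := by
    intro i hi
    have hyi : y + i ≠ 0 := by
      intro h0
      exact hy ((ascPochhammer_eval_eq_zero_iff _ _).mpr
        ⟨i, mem_range.mp hi, eq_neg_of_add_eq_zero_right h0⟩)
    have hQi := congrArg (eval (i : K)) hQ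
    simp only [eval_sub, eval_mul, eval_X, eval_C, sub_neg_eq_add] at hQi
    rw [show P.eval (i : K) = P.eval (-y) + (y + i) * Q.eval (i : K) by linear_combination hQi]
    field_simp
    ring
  rw [sum_congr rfl hsplit, sum_add_distrib, ← mul_sum, sum_neg_one_pow_mul_choose_div_add n y hy]
  rcases eq_or_ne Q 0 with rfl | hQ0
  · simp only [eval_zero, mul_zero, sum_const_zero, zero_add]; ring
  have hdeg : Q.natDegree < n := by
    have := congrArg natDegree hQ
    rw [natDegree_sub_C, natDegree_mul (X_sub_C_ne_zero _) hQ0, natDegree_X_sub_C] at this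
    omega
  rw [sum_neg_one_pow_mul_choose_mul_eval_eq_zero hdeg]
  ring

theorem sum_neg_one_pow_mul_choose_mul_choose_add_div {K : Type*} [Field K] [CharZero K]
    (k l : ℕ) :
    ∑ i ∈ range (l + 1), (-1) ^ i * (l.choose i : K) * ((k + i).choose l / ((k + i : ℕ) + 2 : K))
      = (-1) ^ l / (k + l + 2).choose (l + 1) := by
  have hfact (m : ℕ) : (m ! : K) ≠ 0 := cast_ne_zero.mpr (factorial_ne_zero m)
  set P := (descPochhammer K l).comp (X + C (k : K))
  set y : K := k + 2
  have hP : P.natDegree ≤ l := by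
    rw [natDegree_comp, descPochhammer_natDegree, natDegree_X_add_C, mul_one]
  have hchoose (i : ℕ) : ((k + i).choose l : K) = P.eval (i : K) / l ! := by
    rw [cast_choose_eq_descPochhammer_div, eval_comp, eval_add, eval_X, eval_C]
    push_cast; ring_nf
  have hPy : P.eval (-y) = (-1) ^ l * (l + 1)! := by
    have h2 : (ascPochhammer K l).eval 2 = (l + 1)! := by
      simpa [one_add_one_eq_two, add_comm] using factorial_mul_ascPochhammer K 1 l
    have key := ascPochhammer_eval_neg_eq_descPochhammer K (-2 : K) l
    rw [neg_neg, h2] at key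
    have hsq : ((-1 : K) ^ l) ^ 2 = 1 := by simp [← pow_mul]
    simp only [P, y, eval_comp, eval_add, eval_X, eval_C, neg_add, neg_add_cancel_comm]
    linear_combination (-(-1 : K) ^ l) * key - (descPochhammer K l).eval (-2) * hsq
  have hasc : (ascPochhammer K (l + 1)).eval y = (k + l + 2)! / (k + 1)! := by
    rw [eq_div_iff (hfact _), mul_comm, show k + l + 2 = k + 1 + (l + 1) by ring,
      ← factorial_mul_ascPochhammer K (k + 1) (l + 1),
      show y = ((k + 1 : ℕ) : K) + 1 by push_cast [y]; ring]
  have hy : (ascPochhammer K (l + 1)).eval y ≠ 0 := by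
    rw [hasc]; exact div_ne_zero (hfact _) (hfact _)
  calc _
      = (l ! : K)⁻¹ *
          ∑ i ∈ range (l + 1), (-1) ^ i * (l.choose i : K) * (P.eval (i : K) / (y + i)) := by
        rw [mul_sum]
        refine sum_congr rfl fun i _ ↦ ?_
        rw [hchoose]; push_cast [y]; ring
    _ = (-1) ^ l / (k + l + 2).choose (l + 1) := by
        rw [sum_neg_one_pow_mul_choose_mul_eval_div_add hP y hy, hPy, hasc,
          cast_choose K (by omega : l + 1 ≤ k + l + 2),
          show k + l + 2 - (l + 1) = k + 1 by omega]
        field_simp [hfact l]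

theorem stmt_4 (k l : ℕ) :
    ∑ n ∈ Finset.range (k+l+1),
      (-1)^n / ((n : ℚ) + 2) * (n.choose l) * (if k ≤ n then (l.choose (n - k) : ℚ) else 0)
    = (-1)^(k+l) / (((k+l+2).choose (l+1) : ℚ)) := by
  rw [add_assoc k l 1, sum_range_add, sum_eq_zero fun n hn ↦ by
    rw [if_neg (not_le.mpr (mem_range.mp hn)), mul_zero], zero_add, pow_add, mul_div_assoc,
    ← sum_neg_one_pow_mul_choose_mul_choose_add_div, mul_sum]
  refine sum_congr rfl fun i _ ↦ ?_
  rw [if_pos (Nat.le_add_right k i), Nat.add_sub_cancel_left, pow_add]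
  ring
end

section
/- For any nonnegative integers k and l, the sum over n from 0 to k+l of (-1)^n/(n+1) * C(n,l)*C(l,n-k) equals (-1)^(k+l) / ((k+l+1)*C(k+l,l)). -/
/-!
Substituting `n = k + j`, the sum becomes `(-1)^k ∑ⱼ (-1)^j C(l,j) C(k+j,l) / (k+j+1)`.
As a polynomial in `x`, `l! C(x,l) = x(x-1)⋯(x-l+1)` takes the value `(-1)^l l!` at `x = -1`, so
`C(x,l) / (x+1) = (-1)^l / (x+1) + Q(x)` with `deg Q < l`. The `l`-th finite difference kills `Q`,
and what remains is the discrete Beta integral `∑ⱼ (-1)^j C(l,j) / (k+j+1) = k! l! / (k+l+1)!`.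
-/

open Finset Polynomial Nat

theorem sum_range_choose_mul_neg_one_pow_mul_eval_eq_zero {R : Type*} [CommRing R] {P : R[X]}
    {n : ℕ} (hP : P.degree < n) (y : R) :
    ∑ j ∈ range (n + 1), (n.choose j : R) * ((-1) ^ j * P.eval (y + j)) = 0 := by
  rcases eq_or_ne P 0 with rfl | hP0
  · simp
  have h := congr_fun (fwdDiff_iter_eq_zero_of_degree_lt ((natDegree_lt_iff_degree_lt hP0).2 hP)) y
  rw [fwdDiff_iter_eq_sum_shift, Pi.zero_apply] at h
  calc _ = (-1) ^ n * ∑ j ∈ range (n + 1),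
        ((-1 : ℤ) ^ (n - j) * n.choose j) • P.eval (y + j • 1) := by
        rw [mul_sum]
        refine sum_congr rfl fun j hj => ?_
        obtain ⟨i, rfl⟩ := Nat.exists_eq_add_of_le (Nat.lt_succ_iff.mp (mem_range.mp hj))
        have hi : (-1 : R) ^ i * (-1) ^ i = 1 := by rw [← mul_pow]; simp
        simp only [zsmul_eq_mul, nsmul_one, Nat.add_sub_cancel_left]
        push_cast
        linear_combination (-((j + i).choose j * (-1) ^ j * P.eval (y + j) : R)) * hi
    _ = 0 := by rw [h, mul_zero]

theorem descPochhammer_eval_neg_one (R : Type*) [CommRing R] (n : ℕ) :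
    (descPochhammer R n).eval (-1) = (-1) ^ n * n ! := by
  have h := ascPochhammer_eval_neg_eq_descPochhammer R (-1 : R) n
  have hn : (-1 : R) ^ n * (-1) ^ n = 1 := by rw [← mul_pow]; simp
  rw [neg_neg, ascPochhammer_eval_one] at h
  linear_combination -(-1) ^ n * h - (descPochhammer R n).eval (-1) * hn

theorem sum_range_choose_mul_neg_one_pow_div {K : Type*} [Field K] [CharZero K] (a n : ℕ) :
    ∑ j ∈ range (n + 1), (n.choose j : K) * ((-1) ^ j / (a + j + 1)) =
      a ! * n ! / (a + n + 1)! := by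
  induction n generalizing a with
  | zero =>
    have : (a ! : K) ≠ 0 := Nat.cast_ne_zero.2 (factorial_ne_zero a)
    rw [sum_range_one, Nat.factorial_succ]
    push_cast
    field_simp
    simp
  | succ n ih =>
    calc _ = ∑ j ∈ range (n + 1), (n.choose j : K) * ((-1) ^ j / (a + j + 1))
          - ∑ j ∈ range (n + 1), (n.choose j : K) * ((-1) ^ j / ((a + 1 : ℕ) + j + 1)) := by
          rw [sum_choose_succ_mul (fun j _ => (-1 : K) ^ j / (a + j + 1)), sub_eq_add_neg,
            ← sum_neg_distrib]
          congr 1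
          refine sum_congr rfl fun j _ => ?_
          push_cast
          ring
      _ = _ := by
          rw [ih, ih, show a + 1 + n + 1 = a + n + 1 + 1 by ring,
            show a + (n + 1) + 1 = a + n + 1 + 1 by ring, Nat.factorial_succ (a + n + 1),
            Nat.factorial_succ a, Nat.factorial_succ n]
          have : ((a + n + 1)! : K) ≠ 0 := Nat.cast_ne_zero.2 (factorial_ne_zero _)
          have : ((a + n + 1 + 1 : ℕ) : K) ≠ 0 := Nat.cast_ne_zero.2 (succ_ne_zero _)
          push_cast at *
          field_simp
          ring

theorem sum_range_choose_mul_neg_one_pow_mul_eval_div {K : Type*} [Field K] [CharZero K]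
    {P : K[X]} {n : ℕ} (hP : P.degree ≤ n) (a : ℕ) :
    ∑ j ∈ range (n + 1), (n.choose j : K) * ((-1) ^ j * (P.eval (a + j : K) / (a + j + 1))) =
      P.eval (-1) * ∑ j ∈ range (n + 1), (n.choose j : K) * ((-1) ^ j / (a + j + 1)) := by
  obtain ⟨Q, hQ⟩ := X_sub_C_dvd_sub_C_eval (p := P) (a := -1)
  have hQ_degree : Q.degree < n := by
    rcases eq_or_ne Q 0 with rfl | hQ0
    · simp
    have h := natDegree_le_of_degree_le hP
    rw [← natDegree_sub_C (a := P.eval (-1)), hQ, natDegree_mul (X_sub_C_ne_zero _) hQ0,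
      natDegree_X_sub_C] at h
    exact (natDegree_lt_iff_degree_lt hQ0).1 (by omega)
  have h_eval (x : K) (hx : x + 1 ≠ 0) : P.eval x / (x + 1) = Q.eval x + P.eval (-1) / (x + 1) := by
    have := congr_arg (eval x) hQ
    simp only [eval_sub, eval_C, eval_mul, eval_add, eval_X, eval_one, map_neg, map_one,
      sub_neg_eq_add] at this
    field_simp
    linear_combination this
  calc _ = ∑ j ∈ range (n + 1), (n.choose j : K) * ((-1) ^ j * Q.eval (a + j : K)) +
        P.eval (-1) * ∑ j ∈ range (n + 1), (n.choose j : K) * ((-1) ^ j / (a + j + 1)) := by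
        rw [mul_sum, ← sum_add_distrib]
        refine sum_congr rfl fun j _ => ?_
        rw [h_eval _ (by exact_mod_cast succ_ne_zero (a + j))]
        ring
    _ = _ := by rw [sum_range_choose_mul_neg_one_pow_mul_eval_eq_zero hQ_degree, zero_add]

theorem sum_range_choose_mul_neg_one_pow_mul_choose_div {K : Type*} [Field K] [CharZero K]
    (a l : ℕ) :
    ∑ j ∈ range (l + 1), (l.choose j : K) * ((-1) ^ j * ((a + j).choose l / (a + j + 1))) =
      (-1) ^ l * a ! * l ! / (a + l + 1)! := by
  have hl : (l ! : K) ≠ 0 := Nat.cast_ne_zero.2 (factorial_ne_zero l)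
  have h_choose (m : ℕ) : (m.choose l : K) = (descPochhammer K l).eval (m : K) / l ! := by
    rw [descPochhammer_eval_eq_descFactorial, descFactorial_eq_factorial_mul_choose]
    push_cast
    field_simp
  have h_degree : (descPochhammer K l).degree ≤ l :=
    degree_le_of_natDegree_le (descPochhammer_natDegree K l).le
  calc _ = (l ! : K)⁻¹ * ∑ j ∈ range (l + 1),
        (l.choose j : K) * ((-1) ^ j * ((descPochhammer K l).eval (a + j : K) / (a + j + 1))) := by
        rw [mul_sum]
        refine sum_congr rfl fun j _ => ?_
        rw [h_choose]
        push_cast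
        ring
    _ = _ := by
        rw [sum_range_choose_mul_neg_one_pow_mul_eval_div h_degree,
          sum_range_choose_mul_neg_one_pow_div, descPochhammer_eval_neg_one]
        field_simp

theorem stmt_5 (k l : ℕ) :
    ∑ n ∈ Finset.range (k+l+1),
      (-1)^n / ((n : ℚ) + 1) * (n.choose l) * (if k ≤ n then (l.choose (n - k) : ℚ) else 0)
    = (-1)^(k+l) / (((k : ℚ) + l + 1) * ((k+l).choose l)) := by
  have h_reindex : ∑ n ∈ Finset.range (k+l+1),
      (-1)^n / ((n : ℚ) + 1) * (n.choose l) * (if k ≤ n then (l.choose (n - k) : ℚ) else 0) =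
      (-1) ^ k * ∑ j ∈ range (l + 1),
        (l.choose j : ℚ) * ((-1) ^ j * ((k + j).choose l / (k + j + 1))) := by
    rw [add_assoc, sum_range_add, sum_eq_zero fun n hn => by simp [(mem_range.1 hn).not_ge],
      zero_add, mul_sum]
    refine sum_congr rfl fun j _ => ?_
    simp only [le_add_iff_nonneg_right, zero_le, if_true, Nat.add_sub_cancel_left]
    push_cast
    ring
  have h_factorial : ((k + l + 1)! : ℚ) = (k + l + 1) * (k + l).choose l * k ! * l ! := by
    rw [Nat.factorial_succ, ← add_choose_mul_factorial_mul_factorial]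
    push_cast
    ring
  rw [h_reindex, sum_range_choose_mul_neg_one_pow_mul_choose_div, h_factorial]
  have : (k ! : ℚ) ≠ 0 := Nat.cast_ne_zero.2 (factorial_ne_zero k)
  have : (l ! : ℚ) ≠ 0 := Nat.cast_ne_zero.2 (factorial_ne_zero l)
  field_simp
  ring
end

section
/- (Pfaff transformation for Legendre-type sums) For any nonnegative integer n and any element z of a commutative ring, the sum over k from 0 to n of C(n,k)*C(n+k,k)*(-z)^k equals (-1)^n times the sum over k from 0 to n of C(n,k)*C(n+k,k)*(z-1)^k. -/
/-!
The left-hand side is the shifted Legendre polynomial `Pₙ` evaluated at `z`, and the right-hand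
side is `(-1)ⁿ Pₙ(1 - z)`; the identity is the reflection symmetry of `Pₙ`, which follows from
Rodrigues' formula `n! Pₙ = (d/dX)ⁿ (Xⁿ (1 - X)ⁿ)`.
-/

open Polynomial Finset

theorem Polynomial.aeval_shiftedLegendre {R : Type*} [CommRing R] (n : ℕ) (x : R) :
    aeval x (shiftedLegendre n)
      = ∑ k ∈ range (n + 1), (n.choose k : R) * ((n + k).choose k) * (-x) ^ k := by
  rw [aeval_eq_sum_range, natDegree_shiftedLegendre]
  refine sum_congr rfl fun k _ => ?_
  rw [coeff_shiftedLegendre, Nat.choose_symm_add, zsmul_eq_mul, neg_pow x]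
  push_cast
  ring

theorem stmt_7 {R : Type*} [CommRing R] (n : ℕ) (z : R) :
    ∑ k ∈ Finset.range (n+1), (n.choose k : R) * ((n+k).choose k) * (-z)^k
    = (-1)^n * ∑ k ∈ Finset.range (n+1), (n.choose k : R) * ((n+k).choose k) * (z-1)^k := by
  rw [← aeval_shiftedLegendre, shiftedLegendre_eval_symm, aeval_shiftedLegendre, neg_sub]
end

section
/- For any nonnegative integer n and any element z of a commutative ring, the sum over k from 1 to n of C(n,k)*C(n+k,k)*k*(-z)^(k-1) equals (-1)^(n-1) times the sum over k from 1 to n of C(n,k)*C(n+k,k)*k*(z-1)^(k-1). -/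
/-!
With `P = shiftedLegendre n = ∑ₖ (-1)ᵏ C(n,k) C(n+k,k) Xᵏ`, the two sums are `-P'(z)` and
`-P'(1 - z)`. Differentiating the reflection symmetry `(-1)ⁿ P(1 - X) = P(X)` of the shifted
Legendre polynomial gives `(-1)ⁿ⁺¹ P'(1 - X) = P'(X)`.
-/

open Finset

namespace Polynomial

theorem neg_one_pow_succ_mul_derivative_shiftedLegendre_comp_one_sub_X_eq (n : ℕ) :
    (-1) ^ (n + 1) * (derivative (shiftedLegendre n)).comp (1 - X) =
      derivative (shiftedLegendre n) := by
  have h := congrArg derivative (neg_one_pow_mul_shiftedLegendre_comp_one_sub_X_eq n)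
  rw [derivative_mul, derivative_comp, ← C_1, ← C_neg, ← C_pow, derivative_C] at h
  simpa [pow_succ] using h

lemma derivative_shiftedLegendre_eval_symm (n : ℕ) {R : Type*} [Ring R] (x : R) :
    aeval x (derivative (shiftedLegendre n)) =
      (-1) ^ (n + 1) * aeval (1 - x) (derivative (shiftedLegendre n)) := by
  have := congr(aeval x $(neg_one_pow_succ_mul_derivative_shiftedLegendre_comp_one_sub_X_eq n))
  simpa [aeval_comp] using this.symm

lemma aeval_derivative_shiftedLegendre (n : ℕ) {R : Type*} [Ring R] (x : R) :
    aeval x (derivative (shiftedLegendre n)) =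
      -∑ k ∈ Icc 1 n, (n.choose k : R) * ((n + k).choose k) * (k : R) * (-x) ^ (k - 1) := by
  rw [shiftedLegendre, derivative_sum, range_eq_Ico, sum_eq_sum_Ico_succ_bot (by omega),
    Ico_add_one_right_eq_Icc, ← sum_neg_distrib]
  simp only [derivative_C_mul_X_pow, map_sum, Nat.cast_zero, mul_zero, map_zero, zero_mul,
    zero_add]
  refine sum_congr rfl fun k hk => ?_
  obtain ⟨j, rfl⟩ := Nat.exists_eq_add_of_le' (mem_Icc.mp hk).1
  rw [Nat.add_sub_cancel, map_mul, aeval_C, aeval_X_pow, neg_pow x, Nat.choose_symm_add]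
  rcases neg_one_pow_eq_or R j with h | h <;> simp [pow_succ, h]

end Polynomial

theorem stmt_8 {R : Type*} [CommRing R] (n : ℕ) (z : R) :
    ∑ k ∈ Finset.Icc 1 n, (n.choose k : R) * ((n+k).choose k) * (k : R) * (-z)^(k-1)
    = (-1)^(n-1) * ∑ k ∈ Finset.Icc 1 n, (n.choose k : R) * ((n+k).choose k) * (k : R) * (z-1)^(k-1) := by
  have h := Polynomial.derivative_shiftedLegendre_eval_symm n z
  rw [Polynomial.aeval_derivative_shiftedLegendre, Polynomial.aeval_derivative_shiftedLegendre,
    neg_sub] at h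
  rcases n with _ | m
  · simp
  · rw [Nat.add_sub_cancel]
    linear_combination -h
end

section
/- For any prime p and any nonnegative integers k, l, the sum over n from 0 to p-1 of C(n,k)*C(n,l) equals p times the sum over n from 0 to k+l of (1/(n+1)) * C(n,l)*C(l,n-k)*C(p-1,n). -/
/-!
Expanding `C(n,k) C(n,l)` in the basis `C(n,m)` (Vandermonde's identity together with
`C(n,l) C(n-l,j) = C(n,l+j) C(l+j,l)`) turns the left-hand side into
`∑ₘ C(m,l) C(l,m-k) ∑_{n<p} C(n,m)`. The hockey-stick identity evaluates the inner sum as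
`C(p,m+1) = p/(m+1) · C(p-1,m)`.
-/

open Finset

namespace Nat

theorem sum_range_choose_eq_choose_add_one (p m : ℕ) :
    ∑ n ∈ range p, n.choose m = p.choose (m + 1) := by
  induction p with
  | zero => simp
  | succ p ih => rw [sum_range_succ, ih, choose_succ_succ' p m, add_comm]

theorem choose_sub_eq_ite_of_le {l k j : ℕ} (hj : j ≤ k) :
    l.choose (k - j) = if k ≤ l + j then l.choose (l + j - k) else 0 := by
  split_ifs with h
  · exact choose_symm_of_eq_add (by omega)
  · exact choose_eq_zero_of_lt (by omega)

theorem choose_mul_choose_eq_sum (n k l : ℕ) :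
    n.choose k * n.choose l = ∑ m ∈ range (k + l + 1),
      m.choose l * (if k ≤ m then l.choose (m - k) else 0) * n.choose m := by
  rcases lt_or_ge n l with hnl | hln
  · rw [choose_eq_zero_of_lt hnl, mul_zero]
    refine (sum_eq_zero fun m _ => ?_).symm
    rcases lt_or_ge m l with hml | hlm
    · rw [choose_eq_zero_of_lt hml, zero_mul, zero_mul]
    · rw [choose_eq_zero_of_lt (hnl.trans_le hlm), mul_zero]
  have vandermonde : n.choose k = ∑ j ∈ range (k + 1), l.choose (k - j) * (n - l).choose j := by
    conv_lhs => rw [← Nat.add_sub_cancel' hln]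
    rw [add_choose_eq, ← Nat.sum_antidiagonal_swap, Nat.sum_antidiagonal_eq_sum_range_succ_mk]
    rfl
  have low_terms_vanish : ∑ m ∈ range l,
      m.choose l * (if k ≤ m then l.choose (m - k) else 0) * n.choose m = 0 :=
    sum_eq_zero fun m hm => by rw [choose_eq_zero_of_lt (mem_range.mp hm), zero_mul, zero_mul]
  rw [show k + l + 1 = l + (k + 1) by omega, sum_range_add, low_terms_vanish, zero_add,
    vandermonde, sum_mul]
  refine sum_congr rfl fun j hj => ?_
  have hjk : j ≤ k := Nat.lt_succ_iff.mp (mem_range.mp hj)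
  have hmul := choose_mul (n := n) (k := l + j) (s := l) (Nat.le_add_right l j)
  rw [Nat.add_sub_cancel_left] at hmul
  rw [← choose_sub_eq_ite_of_le hjk, mul_assoc, mul_comm ((n - l).choose j), ← hmul]
  ring

end Nat

theorem cast_choose_add_one_eq {K : Type*} [Field K] [CharZero K] (p m : ℕ) :
    (p.choose (m + 1) : K) = p / (m + 1) * ((p - 1).choose m : ℕ) := by
  rcases p.eq_zero_or_pos with rfl | hp
  · simp
  have key := Nat.add_one_mul_choose_eq (p - 1) m
  rw [Nat.sub_add_cancel hp] at key
  field_simp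
  exact_mod_cast key.symm

theorem stmt_9_general (p : ℕ) (k l : ℕ) :
    ∑ n ∈ Finset.range p, (n.choose k : ℚ) * (n.choose l)
    = (p : ℚ) * ∑ n ∈ Finset.range (k+l+1),
        (1 / ((n : ℚ) + 1)) * (n.choose l) * (if k ≤ n then (l.choose (n - k) : ℚ) else 0)
          * ((p-1).choose n) := by
  set c : ℕ → ℚ := fun m => m.choose l * (if k ≤ m then (l.choose (m - k) : ℚ) else 0)
  calc ∑ n ∈ range p, (n.choose k : ℚ) * (n.choose l)
      = ∑ n ∈ range p, ∑ m ∈ range (k + l + 1), c m * (n.choose m : ℚ) := by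
        refine sum_congr rfl fun n _ => ?_
        rw [← Nat.cast_mul, Nat.choose_mul_choose_eq_sum]
        push_cast [c]
        rfl
    _ = ∑ m ∈ range (k + l + 1), c m * (p.choose (m + 1) : ℚ) := by
        rw [sum_comm]
        refine sum_congr rfl fun m _ => ?_
        rw [← mul_sum, ← Nat.sum_range_choose_eq_choose_add_one, Nat.cast_sum]
    _ = _ := by
        rw [mul_sum]
        refine sum_congr rfl fun m _ => ?_
        rw [cast_choose_add_one_eq]
        ring

theorem stmt_9 (p : ℕ) (hp : p.Prime) (k l : ℕ) :
    ∑ n ∈ Finset.range p, (n.choose k : ℚ) * (n.choose l)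
    = (p : ℚ) * ∑ n ∈ Finset.range (k+l+1),
        (1 / ((n : ℚ) + 1)) * (n.choose l) * (if k ≤ n then (l.choose (n - k) : ℚ) else 0)
          * ((p-1).choose n) :=
  stmt_9_general p k l
end

section
/- Let p be an odd prime and x a p-adic integer with m := ⟨x⟩_p ≤ (p-1)/2, where ⟨x⟩_p is the least nonnegative residue of x mod p, and write x = m + p·t. Then for 0 ≤ k ≤ m, C(x,k)*C(x+k,k) ≡ C(m,k)*C(m+k,k)*(1 + p·t·H_{m+k} − p·t·H_{m−k}) (mod p^2), where H_n is the n-th harmonic number; and for p−m ≤ k ≤ p−1, C(x,k)*C(x+k,k) ≡ 0 (mod p^2). -/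
/-!
Write `ε = p t`. The product `C(x,k) C(x+k,k) (k!)²` is `∏_{j<2k} (x + k - j)`, i.e. the product
of `n + ε` over the `2k` consecutive integers `n = m+k, …, m-k+1`, and `k!` is a `p`-adic unit.
For `k ≤ m` these `n` are units too, so expanding to first order in `ε` gives
`∏ n · (1 + ε ∑ 1/n)` with an error of size `‖ε‖²`; here `∏ n = (k!)² C(m,k) C(m+k,k)` and
`∑ 1/n = H_{m+k} - H_{m-k}`. For `p - m ≤ k < p` the product instead contains the two factors
`x - m = p t` and `x - m + p = p (1 + t)`.
-/

/-- Generalized binomial coefficient `C(x, k) = x(x-1)⋯(x-k+1)/k!` in `ℚ_[p]`. -/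
noncomputable def gbinom {p : ℕ} [Fact p.Prime] (x : ℚ_[p]) (k : ℕ) : ℚ_[p] :=
  (∏ i ∈ Finset.range k, (x - i)) / (k.factorial : ℚ_[p])

/-- Harmonic number `H_n = ∑_{j=1}^n 1/j` in `ℚ_[p]`. -/
noncomputable def harmonic' {p : ℕ} [Fact p.Prime] (n : ℕ) : ℚ_[p] :=
  ∑ j ∈ Finset.range n, ((j : ℚ_[p]) + 1)⁻¹

open Finset Nat

section Ultrametric

variable {K ι : Type*} [NormedField K] [IsUltrametricDist K]

lemma norm_prod_one_add_mul_sub_le (s : Finset ι) (u : ι → K) {ε : K} (hε : ‖ε‖ ≤ 1)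
    (hu : ∀ i ∈ s, ‖u i‖ ≤ 1) :
    ‖∏ i ∈ s, (1 + ε * u i) - (1 + ε * ∑ i ∈ s, u i)‖ ≤ ‖ε‖ ^ 2 := by
  classical
  induction s using Finset.induction_on with
  | empty => simp
  | insert a s ha ih =>
    rw [prod_insert ha, sum_insert ha]
    have hua : ‖u a‖ ≤ 1 := hu a (mem_insert_self a s)
    have hus : ∀ i ∈ s, ‖u i‖ ≤ 1 := fun i hi => hu i (mem_insert_of_mem hi)
    have hS : ‖∑ i ∈ s, u i‖ ≤ 1 :=
      IsUltrametricDist.norm_sum_le_of_forall_le_of_nonneg zero_le_one hus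
    have hfactor : ‖1 + ε * u a‖ ≤ 1 :=
      (IsUltrametricDist.norm_add_le_max _ _).trans <| max_le norm_one.le <| by
        rw [norm_mul]; exact mul_le_one₀ hε (norm_nonneg _) hua
    have hsplit : (1 + ε * u a) * ∏ i ∈ s, (1 + ε * u i) - (1 + ε * (u a + ∑ i ∈ s, u i)) =
        (1 + ε * u a) * (∏ i ∈ s, (1 + ε * u i) - (1 + ε * ∑ i ∈ s, u i)) +
          ε ^ 2 * (u a * ∑ i ∈ s, u i) := by ring
    rw [hsplit]
    refine (IsUltrametricDist.norm_add_le_max _ _).trans (max_le ?_ ?_)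
    · rw [norm_mul]
      exact (mul_le_of_le_one_left (norm_nonneg _) hfactor).trans (ih hus)
    · rw [norm_mul, norm_pow, norm_mul]
      exact mul_le_of_le_one_right (by positivity) (mul_le_one₀ hua (norm_nonneg _) hS)

lemma norm_prod_add_sub_le (s : Finset ι) (f : ι → K) {ε : K} (hε : ‖ε‖ ≤ 1)
    (hf : ∀ i ∈ s, ‖f i‖ = 1) :
    ‖∏ i ∈ s, (f i + ε) - (∏ i ∈ s, f i) * (1 + ε * ∑ i ∈ s, (f i)⁻¹)‖ ≤ ‖ε‖ ^ 2 := by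
  have hfactor : ∏ i ∈ s, (f i + ε) = (∏ i ∈ s, f i) * ∏ i ∈ s, (1 + ε * (f i)⁻¹) := by
    rw [← prod_mul_distrib]
    refine prod_congr rfl fun i hi => ?_
    have : f i ≠ 0 := norm_ne_zero_iff.mp (by rw [hf i hi]; exact one_ne_zero)
    field_simp
  rw [hfactor, ← mul_sub, norm_mul, norm_prod, prod_eq_one hf, one_mul]
  exact norm_prod_one_add_mul_sub_le s _ hε fun i hi => by rw [norm_inv, hf i hi, inv_one]

end Ultrametric

lemma norm_prod_le_mul_of_norm_le_one {K ι : Type*} [NormedField K] [DecidableEq ι]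
    {s : Finset ι} {f : ι → K} (hf : ∀ l ∈ s, ‖f l‖ ≤ 1) {i j : ι} (hi : i ∈ s) (hj : j ∈ s)
    (hij : i ≠ j) : ‖∏ l ∈ s, f l‖ ≤ ‖f i‖ * ‖f j‖ := by
  rw [← mul_prod_erase s f hi, ← mul_prod_erase (s.erase i) f (mem_erase.2 ⟨hij.symm, hj⟩),
    ← mul_assoc, norm_mul, norm_mul (f i), norm_prod]
  exact mul_le_of_le_one_right (by positivity) <|
    prod_le_one (fun _ _ => norm_nonneg _) fun l hl => hf l (mem_of_mem_erase (mem_of_mem_erase hl))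

lemma Nat.descFactorial_two_mul (m k : ℕ) :
    (m + k).descFactorial (2 * k) = k ! * m.choose k * (k ! * (m + k).choose k) := by
  rw [← descFactorial_mul_descFactorial (show k ≤ 2 * k by omega), show 2 * k - k = k by omega,
    Nat.add_sub_cancel, descFactorial_eq_factorial_mul_choose,
    descFactorial_eq_factorial_mul_choose]

section Padic

variable {p : ℕ} [Fact p.Prime]

lemma norm_natCast_eq_one_of_pos_of_lt {n : ℕ} (h0 : 0 < n) (hn : n < p) :
    ‖(n : ℚ_[p])‖ = 1 :=
  Padic.norm_natCast_eq_one_iff.2 (coprime_of_lt_prime h0.ne' hn Fact.out)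

lemma norm_factorial_eq_one {k : ℕ} (hk : k < p) : ‖(k ! : ℚ_[p])‖ = 1 :=
  Padic.norm_natCast_eq_one_iff.2 ((Fact.out : p.Prime).coprime_factorial_of_lt hk)

lemma norm_p_mul_le {t : ℚ_[p]} (ht : ‖t‖ ≤ 1) : ‖(p : ℚ_[p]) * t‖ ≤ (p : ℝ)⁻¹ := by
  rw [norm_mul, Padic.norm_p]
  exact mul_le_of_le_one_right (by positivity) ht

lemma gbinom_mul_gbinom_add (x : ℚ_[p]) (k : ℕ) :
    gbinom x k * gbinom (x + (k : ℚ_[p])) k =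
      (∏ j ∈ range (2 * k), (x + k - (j : ℚ_[p]))) / ((k ! : ℚ_[p]) * (k ! : ℚ_[p])) := by
  rw [gbinom, gbinom, div_mul_div_comm (∏ i ∈ range k, (x - i)), two_mul, prod_range_add, mul_comm]
  congr 2
  refine prod_congr rfl fun i _ => ?_
  push_cast
  ring

lemma harmonic'_add (n r : ℕ) :
    harmonic' (p := p) (n + r) = harmonic' n + ∑ j ∈ range r, ((n + r - j : ℕ) : ℚ_[p])⁻¹ := by
  induction r with
  | zero => simp
  | succ r ih =>
    rw [← add_assoc, harmonic', sum_range_succ, ← harmonic', ih, sum_range_succ', add_assoc]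
    congr 2
    · simp only [Nat.add_sub_add_right]
    · simp

lemma norm_gbinom_mul_gbinom_add_sub_le {m k : ℕ} (hk : k ≤ m) (hmk : m + k < p) {ε : ℚ_[p]}
    (hε : ‖ε‖ ≤ 1) :
    ‖gbinom ((m : ℚ_[p]) + ε) k * gbinom ((m : ℚ_[p]) + ε + (k : ℚ_[p])) k -
        (m.choose k : ℚ_[p]) * ((m + k).choose k : ℚ_[p]) *
          (1 + ε * harmonic' (m + k) - ε * harmonic' (m - k))‖ ≤ ‖ε‖ ^ 2 := by
  set f : ℕ → ℚ_[p] := fun j => ((m + k - j : ℕ) : ℚ_[p])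
  have hf : ∀ j ∈ range (2 * k), ‖f j‖ = 1 := fun j hj =>
    norm_natCast_eq_one_of_pos_of_lt (by rw [mem_range] at hj; omega) (by omega)
  have hfactors :
      ∏ j ∈ range (2 * k), ((m : ℚ_[p]) + ε + k - j) = ∏ j ∈ range (2 * k), (f j + ε) :=
    prod_congr rfl fun j hj => by
      simp only [f, mem_range] at hj ⊢
      rw [Nat.cast_sub (by omega)]
      push_cast
      ring
  have hprod : ∏ j ∈ range (2 * k), f j = k ! * m.choose k * (k ! * (m + k).choose k) := by
    simp only [f]
    rw [← Nat.cast_prod, ← descFactorial_eq_prod_range, descFactorial_two_mul]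
    push_cast
    ring
  have hsum : ∑ j ∈ range (2 * k), (f j)⁻¹ = harmonic' (m + k) - harmonic' (m - k) := by
    have h := harmonic'_add (p := p) (m - k) (2 * k)
    rw [show m - k + 2 * k = m + k by omega] at h
    rw [h]
    ring
  have hk_fac : (k ! : ℚ_[p]) ≠ 0 := by exact_mod_cast (factorial_pos k).ne'
  have hmain : (m.choose k : ℚ_[p]) * ((m + k).choose k : ℚ_[p]) *
      (1 + ε * harmonic' (m + k) - ε * harmonic' (m - k)) =
        (∏ j ∈ range (2 * k), f j) * (1 + ε * ∑ j ∈ range (2 * k), (f j)⁻¹) /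
          ((k ! : ℚ_[p]) * (k ! : ℚ_[p])) := by
    rw [hprod, hsum]
    field_simp
    ring
  rw [gbinom_mul_gbinom_add, hfactors, hmain, ← sub_div, norm_div, norm_mul,
    norm_factorial_eq_one (by omega), mul_one, div_one]
  exact norm_prod_add_sub_le _ f hε hf

lemma norm_gbinom_mul_gbinom_add_le {m k : ℕ} (hmk : m < k) (hpk : p ≤ m + k) (hkp : k < p)
    {t : ℚ_[p]} (ht : ‖t‖ ≤ 1) :
    ‖gbinom ((m : ℚ_[p]) + (p : ℚ_[p]) * t) k *
      gbinom ((m : ℚ_[p]) + (p : ℚ_[p]) * t + (k : ℚ_[p])) k‖ ≤ (p : ℝ)⁻¹ ^ 2 := by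
  have hle : ∀ j ∈ range (2 * k), ‖(m : ℚ_[p]) + p * t + k - j‖ ≤ 1 := fun j _ => by
    rw [show (m : ℚ_[p]) + p * t + k - j = ((m + k - j : ℤ) : ℚ_[p]) + p * t by push_cast; ring]
    exact (IsUltrametricDist.norm_add_le_max _ _).trans <|
      max_le (IsUltrametricDist.norm_intCast_le_one _ _)
        ((norm_p_mul_le ht).trans (Nat.cast_inv_le_one p))
  have h_pt : ‖(m : ℚ_[p]) + p * t + k - ((k + m : ℕ) : ℚ_[p])‖ ≤ (p : ℝ)⁻¹ := by
    rw [show (m : ℚ_[p]) + p * t + k - ((k + m : ℕ) : ℚ_[p]) = p * t by push_cast; ring]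
    exact norm_p_mul_le ht
  have h_p1t : ‖(m : ℚ_[p]) + p * t + k - ((k + m - p : ℕ) : ℚ_[p])‖ ≤ (p : ℝ)⁻¹ := by
    rw [Nat.cast_sub (by omega), show (m : ℚ_[p]) + p * t + k - ((k + m : ℕ) - p) = p * (1 + t) by
      push_cast; ring]
    exact norm_p_mul_le <| (IsUltrametricDist.norm_add_le_max _ _).trans (max_le norm_one.le ht)
  rw [gbinom_mul_gbinom_add, norm_div, norm_mul, norm_factorial_eq_one hkp, mul_one, div_one, sq]
  refine (norm_prod_le_mul_of_norm_le_one hle (mem_range.2 (show k + m < 2 * k by omega))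
    (mem_range.2 (show k + m - p < 2 * k by omega)) (by omega)).trans ?_
  exact mul_le_mul h_pt h_p1t (norm_nonneg _) (by positivity)

end Padic

theorem stmt_11_general (p : ℕ) [Fact p.Prime] (x t : ℚ_[p]) (m : ℕ)
    (ht : ‖t‖ ≤ 1) (hx : x = (m : ℚ_[p]) + (p : ℚ_[p]) * t) (hm : m ≤ (p - 1) / 2) :
    (∀ k : ℕ, k ≤ m →
      ‖gbinom x k * gbinom (x + (k : ℚ_[p])) k -
        (m.choose k : ℚ_[p]) * ((m+k).choose k : ℚ_[p]) *
          (1 + (p : ℚ_[p]) * t * harmonic' (m + k) - (p : ℚ_[p]) * t * harmonic' (m - k))‖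
        ≤ (p : ℝ) ^ (-2 : ℤ)) ∧
    (∀ k : ℕ, p - m ≤ k → k ≤ p - 1 →
      ‖gbinom x k * gbinom (x + (k : ℚ_[p])) k‖ ≤ (p : ℝ) ^ (-2 : ℤ)) := by
  subst hx
  have hp : 2 ≤ p := (Fact.out : p.Prime).two_le
  have hε : ‖(p : ℚ_[p]) * t‖ ≤ (p : ℝ)⁻¹ := norm_p_mul_le ht
  rw [show (p : ℝ) ^ (-2 : ℤ) = (p : ℝ)⁻¹ ^ 2 by rw [zpow_neg, inv_pow]; norm_cast]
  refine ⟨fun k hk => ?_, fun k hpk hkp =>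
    norm_gbinom_mul_gbinom_add_le (by omega) (by omega) (by omega) ht⟩
  refine (norm_gbinom_mul_gbinom_add_sub_le hk (by omega)
    (hε.trans (Nat.cast_inv_le_one p))).trans ?_
  exact pow_le_pow_left₀ (norm_nonneg _) hε 2

theorem stmt_11 (p : ℕ) [Fact p.Prime] (hp : p ≠ 2) (x t : ℚ_[p]) (m : ℕ)
    (ht : ‖t‖ ≤ 1) (hx : x = (m : ℚ_[p]) + (p : ℚ_[p]) * t) (hm : m ≤ (p - 1) / 2) :
    (∀ k : ℕ, k ≤ m →
      ‖gbinom x k * gbinom (x + (k : ℚ_[p])) k -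
        (m.choose k : ℚ_[p]) * ((m+k).choose k : ℚ_[p]) *
          (1 + (p : ℚ_[p]) * t * harmonic' (m + k) - (p : ℚ_[p]) * t * harmonic' (m - k))‖
        ≤ (p : ℝ) ^ (-2 : ℤ)) ∧
    (∀ k : ℕ, p - m ≤ k → k ≤ p - 1 →
      ‖gbinom x k * gbinom (x + (k : ℚ_[p])) k‖ ≤ (p : ℝ) ^ (-2 : ℤ)) :=
  stmt_11_general p x t m ht hx hm
end

section
/- Let p be an odd prime and x a p-adic integer with m := ⟨x⟩_p < (p-1)/2, written as x = m + p·t. Then for m+1 ≤ k ≤ p−1−m, C(x,k)*C(x+k,k) ≡ (−1)^(m+k+1) · p·t · C(m+k,k) / ((k−m)·C(k,m)) (mod p^2). -/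
/-!
Put `F(X) = ∏_{i<k} (X - i) · ∏_{i<k} (X + k - i)`, so that `k!² C(x,k) C(x+k,k) = F(x)`.
Since `m < k`, `F = (X - m) Φ` with `Φ ∈ ℤ[X]`, and `x - m = p t` gives
`F(x) - (x - m) Φ(m) = p t (Φ(x) - Φ(m))`.
An integer polynomial is `1`-Lipschitz on `ℤ_p`, so this difference has norm at most `p⁻²`.
As `k < p`, `k!` is a `p`-adic unit, and `Φ(m) = (-1)^(k-1-m) m! (k-1-m)! · (m+k)!/m!`
is exactly the value required by the right-hand side.
-/

open Finset Polynomial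
open scoped Nat

theorem prod_range_sub_self (m : ℕ) : ∏ i ∈ range m, ((m : ℤ) - i) = m ! := by
  rw [← Nat.descFactorial_self, Nat.descFactorial_eq_prod_range, Nat.cast_prod]
  exact prod_congr rfl fun i hi => by rw [Nat.cast_sub (mem_range.mp hi).le]

theorem prod_Ico_sub_self (m n : ℕ) :
    ∏ i ∈ Ico (m + 1) (m + 1 + n), ((m : ℤ) - i) = (-1) ^ n * n ! := by
  rw [prod_Ico_eq_prod_range, Nat.add_sub_cancel_left, ← prod_range_add_one_eq_factorial,
    Nat.cast_prod, ← card_range n, ← prod_const, card_range, ← prod_mul_distrib]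
  exact prod_congr rfl fun i _ => by push_cast; ring

theorem prod_range_erase_sub_self {m k : ℕ} (h : m < k) :
    (∏ i ∈ (range k).erase m, ((m : ℤ) - i)) * ((k - m : ℕ) : ℤ) * k.choose m
      = (-1) ^ (m + k + 1) * k ! := by
  obtain ⟨n, rfl⟩ : ∃ n, k = m + 1 + n := ⟨k - (m + 1), by omega⟩
  have hsplit : (range (m + 1 + n)).erase m = range m ∪ Ico (m + 1) (m + 1 + n) := by
    ext i; simp only [mem_erase, mem_range, mem_union, mem_Ico]; omega
  have hdisj : Disjoint (range m) (Ico (m + 1) (m + 1 + n)) :=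
    disjoint_left.mpr fun i hi hi' => by simp only [mem_range, mem_Ico] at hi hi'; omega
  rw [hsplit, prod_union hdisj, prod_range_sub_self, prod_Ico_sub_self,
    show m + 1 + n - m = n + 1 by omega, show m + 1 + n = n + 1 + m by omega,
    show m + (n + 1 + m) + 1 = n + 2 * (m + 1) by omega, pow_add, pow_mul,
    ← Nat.add_choose_mul_factorial_mul_factorial (n + 1) m, Nat.factorial_succ]
  push_cast
  ring

theorem prod_range_add_sub (m k : ℕ) :
    ∏ i ∈ range k, ((m : ℤ) + k - i) = k ! * (m + k).choose k := by
  rw [← Nat.cast_mul, ← Nat.descFactorial_eq_factorial_mul_choose,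
    Nat.descFactorial_eq_prod_range, Nat.cast_prod]
  refine prod_congr rfl fun i hi => ?_
  push_cast [Nat.cast_sub ((mem_range.mp hi).le.trans (Nat.le_add_left k m))]
  ring

noncomputable def binomCofactor (m k : ℕ) : ℤ[X] :=
  (∏ i ∈ (range k).erase m, (X - (i : ℤ[X]))) *
    ∏ i ∈ range k, (X + (k : ℤ[X]) - (i : ℤ[X]))

theorem sub_mul_aeval_binomCofactor {A : Type*} [CommRing A] {m k : ℕ} (h : m < k) (a : A) :
    (a - m) * aeval a (binomCofactor m k)
      = (∏ i ∈ range k, (a - i)) * ∏ i ∈ range k, (a + k - i) := by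
  simp only [binomCofactor, map_mul, map_prod, map_sub, map_add, aeval_X, map_natCast]
  rw [← mul_assoc, mul_prod_erase _ (fun i : ℕ => a - i) (mem_range.mpr h)]

theorem aeval_binomCofactor_mul {A : Type*} [CommRing A] {m k : ℕ} (h : m < k) :
    aeval (m : A) (binomCofactor m k) * ((k - m : ℕ) : A) * k.choose m
      = (-1) ^ (m + k + 1) * (k ! : A) ^ 2 * (m + k).choose k := by
  have hQ := congrArg (Int.cast : ℤ → A) (prod_range_erase_sub_self h)
  have hR := congrArg (Int.cast : ℤ → A) (prod_range_add_sub m k)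
  push_cast at hQ hR
  simp only [binomCofactor, map_mul, map_prod, map_sub, map_add, aeval_X, map_natCast]
  rw [hR]
  linear_combination (k ! * (m + k).choose k : A) * hQ

theorem Padic.norm_aeval_sub_aeval_le {p : ℕ} [Fact p.Prime] (f : ℤ[X]) {a b : ℚ_[p]}
    (ha : ‖a‖ ≤ 1) (hb : ‖b‖ ≤ 1) : ‖aeval a f - aeval b f‖ ≤ ‖a - b‖ := by
  obtain ⟨a, rfl⟩ : ∃ a' : ℤ_[p], (a' : ℚ_[p]) = a := ⟨⟨a, ha⟩, rfl⟩
  obtain ⟨b, rfl⟩ : ∃ b' : ℤ_[p], (b' : ℚ_[p]) = b := ⟨⟨b, hb⟩, rfl⟩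
  have hcoe (z : ℤ_[p]) : aeval (z : ℚ_[p]) f = ((aeval z f : ℤ_[p]) : ℚ_[p]) :=
    aeval_algebraMap_apply ℚ_[p] z f
  obtain ⟨q, hq⟩ : a - b ∣ aeval a f - aeval b f := by
    simpa only [aeval_def, eval₂_eq_eval_map] using
      sub_dvd_eval_sub a b (f.map (algebraMap ℤ ℤ_[p]))
  rw [hcoe, hcoe, ← PadicInt.coe_sub, ← PadicInt.coe_sub, PadicInt.padic_norm_e_of_padicInt,
    PadicInt.padic_norm_e_of_padicInt, hq, norm_mul]
  exact mul_le_of_le_one_right (norm_nonneg _) (PadicInt.norm_le_one q)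

theorem stmt_12_general (p : ℕ) [Fact p.Prime] (x t : ℚ_[p]) (m : ℕ)
    (ht : ‖t‖ ≤ 1) (hx : x = (m : ℚ_[p]) + (p : ℚ_[p]) * t) :
    ∀ k : ℕ, m + 1 ≤ k → k ≤ p - 1 - m →
      ‖gbinom x k * gbinom (x + (k : ℚ_[p])) k -
        (-1)^(m+k+1) * (p : ℚ_[p]) * t * ((m+k).choose k : ℚ_[p])
          / ((((k - m : ℕ) : ℚ_[p])) * (k.choose m : ℚ_[p]))‖
      ≤ (p : ℝ) ^ (-2 : ℤ) := by
  intro k hmk hkp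
  have hpt : ‖(p : ℚ_[p]) * t‖ ≤ (p : ℝ)⁻¹ := by
    rw [norm_mul, Padic.norm_p]
    exact mul_le_of_le_one_right (by positivity) ht
  have hm1 : ‖(m : ℚ_[p])‖ ≤ 1 := IsUltrametricDist.norm_natCast_le_one _ m
  have hx1 : ‖x‖ ≤ 1 := hx ▸ (Padic.nonarchimedean _ _).trans
    (max_le hm1 (hpt.trans (inv_le_one_of_one_le₀ (mod_cast (Fact.out : p.Prime).one_le))))
  have hxm : x - m = p * t := by rw [hx]; ring
  have hfac : ‖(k ! : ℚ_[p])‖ = 1 := Padic.norm_natCast_eq_one_iff.mpr <|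
    (Nat.Prime.coprime_iff_not_dvd Fact.out).mpr (by rw [Nat.Prime.dvd_factorial Fact.out]; omega)
  have hlhs : gbinom x k * gbinom (x + (k : ℚ_[p])) k
      = (x - m) * aeval x (binomCofactor m k) / (k ! : ℚ_[p]) ^ 2 := by
    rw [gbinom, gbinom, sub_mul_aeval_binomCofactor (by omega), div_mul_div_comm, sq]
  have hrhs : (-1) ^ (m + k + 1) * (p : ℚ_[p]) * t * ((m + k).choose k : ℚ_[p])
        / ((((k - m : ℕ) : ℚ_[p])) * (k.choose m : ℚ_[p]))
      = (x - m) * aeval (m : ℚ_[p]) (binomCofactor m k) / (k ! : ℚ_[p]) ^ 2 := by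
    have hkm : ((k - m : ℕ) : ℚ_[p]) ≠ 0 := Nat.cast_ne_zero.mpr (by omega)
    have hc : ((k.choose m : ℕ) : ℚ_[p]) ≠ 0 :=
      Nat.cast_ne_zero.mpr (Nat.choose_pos (by omega)).ne'
    rw [hxm, div_eq_div_iff (mul_ne_zero hkm hc)
      (pow_ne_zero 2 (Nat.cast_ne_zero.mpr k.factorial_ne_zero))]
    linear_combination
      -(p * t : ℚ_[p]) * aeval_binomCofactor_mul (A := ℚ_[p]) (show m < k by omega)
  rw [hlhs, hrhs, ← sub_div, ← mul_sub, norm_div, norm_pow, hfac, one_pow, div_one, norm_mul,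
    hxm]
  calc _ ≤ ‖(p : ℚ_[p]) * t‖ * ‖(p : ℚ_[p]) * t‖ := by
        gcongr
        exact hxm ▸ Padic.norm_aeval_sub_aeval_le _ hx1 hm1
    _ ≤ (p : ℝ)⁻¹ * (p : ℝ)⁻¹ := mul_le_mul hpt hpt (norm_nonneg _) (by positivity)
    _ = (p : ℝ) ^ (-2 : ℤ) := by rw [zpow_neg, zpow_two, mul_inv]

theorem stmt_12 (p : ℕ) [Fact p.Prime] (hp : p ≠ 2) (x t : ℚ_[p]) (m : ℕ)
    (ht : ‖t‖ ≤ 1) (hx : x = (m : ℚ_[p]) + (p : ℚ_[p]) * t) (hm : m < (p - 1) / 2) :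
    ∀ k : ℕ, m + 1 ≤ k → k ≤ p - 1 - m →
      ‖gbinom x k * gbinom (x + (k : ℚ_[p])) k -
        (-1)^(m+k+1) * (p : ℚ_[p]) * t * ((m+k).choose k : ℚ_[p])
          / ((((k - m : ℕ) : ℚ_[p])) * (k.choose m : ℚ_[p]))‖
      ≤ (p : ℝ) ^ (-2 : ℤ) :=
  stmt_12_general p x t m ht hx
end
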